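/- arXiv:0804.1091 — 2 statements merged into one kernel-verified Lean document; each statement's English description precedes it below -/
import Mathlib

section
/- Let A be a (not necessarily commutative) ring, δ = (δ_1,…,δ_n) pairwise commuting derivations of A, and {x^[α] : α ∈ I} a δ-descent, where I = {α ∈ ℕ^n : α_i ≤ d_i for all i}, d_i ∈ ℕ ∪ {∞}. For a family {x'^[α] : α ∈ I} of elements of A the following are equivalent: (1) {x'^[α]} is a δ-descent; (2) x'^[0] = 1 and there exist elements λ_γ ∈ A^δ (indexed by nonzero γ ∈ I) such that x'^[α] = x^[α] + Σ_{0 ≠ β ≤ α} λ_β x^[α−β] for every nonzero α ∈ I; (3) x'^[0] = 1 and there exist elements μ_γ ∈ A^δ (nonzero γ ∈ I) such that x'^[α] = x^[α] + Σ_{0 ≠ β ≤ α} x^[α−β] μ_β for every nonzero α ∈ I. -/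
/-- `multiIter δ α = δ_1^{α_1} ∘ ⋯ ∘ δ_n^{α_n}` (the maps are assumed to commute pairwise,
so the order of composition is irrelevant). -/
def multiIter {A : Type*} {n : ℕ} (δ : Fin n → A → A) (α : Fin n → ℕ) : A → A :=
  (List.finRange n).foldr (fun i f => (δ i)^[α i] ∘ f) id

/-- A family `x : (Fin n → ℕ) → A`, thought of as defined on
`I = {α : ∀ i, α i ≤ d i}`, is a `δ`-descent if `x 0 = 1` and
`δ^α (x β) = x (β - α)` for all `α ∈ ℕⁿ`, `β ∈ I` (where `x` of an index with a negative
component is interpreted as `0`). -/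
def IsDescent {A : Type*} [Ring A] {n : ℕ} (δ : Fin n → A → A) (d : Fin n → ℕ∞)
    (x : (Fin n → ℕ) → A) : Prop :=
  x 0 = 1 ∧ ∀ α β : Fin n → ℕ, (∀ i, (β i : ℕ∞) ≤ d i) →
    (α ≤ β → multiIter δ α (x β) = x (β - α)) ∧ (¬ α ≤ β → multiIter δ α (x β) = 0)


/-! Read a family `x` as the truncation to the box `I` of a power series in commuting
variables, so that condition (2) says `x' = λ ⋆ x` on `I` for the convolution `⋆`, with `λ_0 = 1`
and all `λ_β` constants. Since `δ^α` commutes with left multiplication by constants, a convolution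
`λ ⋆ x` of constants with a descent is again a descent. Conversely, because `x^[0] = 1`, the
equations `x' = λ ⋆ x` on `I` can be solved recursively for `λ`; applying `δ_i` to the equation at
`γ` and comparing with the equation at `γ - e_i` shows by well-founded induction that
`δ_i λ_γ = 0`. Condition (3) is condition (2) in the opposite ring `Aᵐᵒᵖ`, where the `δ_i` are
still derivations. -/

open Finset MulOpposite

section IndexBox

variable {ι : Type*}

def indexBox (d : ι → ℕ∞) : Set (ι → ℕ) := {γ | ∀ i, (γ i : ℕ∞) ≤ d i}

lemma mem_indexBox_of_le {d : ι → ℕ∞} {β γ : ι → ℕ} (hγ : γ ∈ indexBox d) (h : β ≤ γ) :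
    β ∈ indexBox d :=
  fun i => (Nat.cast_le.2 (h i)).trans (hγ i)

variable [Fintype ι] [DecidableEq ι]

open Classical in
lemma sum_Icc_ite_le_tsub {M : Type*} [AddCommMonoid M] (g : (ι → ℕ) → M) (α γ : ι → ℕ) :
    ∑ β ∈ Icc 0 γ, (if α ≤ γ - β then g β else 0) =
      if α ≤ γ then ∑ β ∈ Icc 0 (γ - α), g β else 0 := by
  rw [← sum_filter]
  split_ifs with hαγ
  · congr 1
    ext β
    simp only [mem_filter, mem_Icc, zero_le, true_and, Pi.le_def, Pi.sub_apply] at hαγ ⊢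
    exact ⟨fun h i => by have := h.1 i; have := h.2 i; have := hαγ i; omega,
      fun h => ⟨fun i => by have := h i; omega, fun i => by have := h i; have := hαγ i; omega⟩⟩
  · refine sum_eq_zero fun β hβ => absurd ?_ hαγ
    simp only [mem_filter, mem_Icc, zero_le, true_and, Pi.le_def, Pi.sub_apply] at hβ
    exact Pi.le_def.2 fun i => by have := hβ.1 i; have := hβ.2 i; omega

end IndexBox

section Convolution

variable {ι A : Type*} [Fintype ι] [DecidableEq ι] [Ring A]

def convolve (c x : (ι → ℕ) → A) (γ : ι → ℕ) : A :=
  ∑ β ∈ Icc 0 γ, c β * x (γ - β)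

lemma convolve_zero (c x : (ι → ℕ) → A) : convolve c x 0 = c 0 * x 0 := by
  simp [convolve]

lemma convolve_eq_add_sum_erase {c : (ι → ℕ) → A} (hc : c 0 = 1) (x : (ι → ℕ) → A) (γ : ι → ℕ) :
    convolve c x γ = x γ + ∑ β ∈ (Icc 0 γ).erase 0, c β * x (γ - β) := by
  rw [convolve, ← add_sum_erase _ _ (left_mem_Icc.2 zero_le)]
  simp [hc]

open Classical in
noncomputable def descentCoeff (d : ι → ℕ∞) (x x' : (ι → ℕ) → A) (γ : ι → ℕ) : A :=
  if γ ∈ indexBox d then x' γ - ∑ β ∈ (Ico 0 γ).attach, descentCoeff d x x' β * x (γ - β) else 0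
termination_by wellFounded_lt.wrap γ
decreasing_by exact (mem_Ico.1 β.2).2

variable {d : ι → ℕ∞} {x x' : (ι → ℕ) → A} {γ : ι → ℕ}

lemma descentCoeff_of_notMem (hγ : γ ∉ indexBox d) : descentCoeff d x x' γ = 0 := by
  rw [descentCoeff, if_neg hγ]

lemma convolve_descentCoeff (hx : x 0 = 1) (hγ : γ ∈ indexBox d) :
    convolve (descentCoeff d x x') x γ = x' γ := by
  rw [convolve, ← Ico_insert_right zero_le, sum_insert right_notMem_Ico, tsub_self, hx, mul_one,
    descentCoeff, if_pos hγ, sum_attach (Ico 0 γ) fun β => descentCoeff d x x' β * x (γ - β)]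
  abel

end Convolution

section MultiIter

variable {A : Type*} {n : ℕ} (δ : Fin n → A → A)

lemma multiIter_induction {P : (A → A) → Prop} (hid : P id)
    (hcomp : ∀ f g, P f → P g → P (f ∘ g)) (hδ : ∀ i, P (δ i)) (α : Fin n → ℕ) :
    P (multiIter δ α) := by
  have hiter (f : A → A) (hf : P f) (k : ℕ) : P f^[k] := by
    induction k with
    | zero => exact hid
    | succ k ih => rw [Function.iterate_succ']; exact hcomp _ _ hf ih
  unfold multiIter
  induction List.finRange n with
  | nil => exact hid
  | cons i l ih => exact hcomp ((δ i)^[α i]) _ (hiter _ (hδ i) (α i)) ih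

lemma multiIter_semiconj {B : Type*} (δ' : Fin n → B → B) {e : A → B}
    (h : ∀ i, Function.Semiconj e (δ i) (δ' i)) (α : Fin n → ℕ) :
    Function.Semiconj e (multiIter δ α) (multiIter δ' α) := by
  unfold multiIter
  induction List.finRange n with
  | nil => exact Function.Semiconj.id_right
  | cons i l ih => exact ((h i).iterate_right (α i)).comp_right ih

lemma foldr_iterate_single (i : Fin n) (k : ℕ) (l : List (Fin n)) :
    l.foldr (fun j f => (δ j)^[(Pi.single i k : Fin n → ℕ) j] ∘ f) id = (δ i)^[k * l.count i] := by
  induction l with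
  | nil => rfl
  | cons j l ih =>
    rw [List.foldr_cons, ih, List.count_cons]
    by_cases hji : j = i
    · subst hji
      rw [Pi.single_eq_same, ← Function.iterate_add]
      simp [mul_add, add_comm]
    · simp [hji]

lemma multiIter_single (i : Fin n) (k : ℕ) : multiIter δ (Pi.single i k) = (δ i)^[k] := by
  rw [multiIter, foldr_iterate_single, List.count_finRange, mul_one]

end MultiIter

section Additive

variable {A : Type*} [Ring A] {n : ℕ} {δ : Fin n → A → A}

lemma multiIter_map_sum (hadd : ∀ i a b, δ i (a + b) = δ i a + δ i b) (α : Fin n → ℕ)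
    {κ : Type*} (s : Finset κ) (f : κ → A) :
    multiIter δ α (∑ k ∈ s, f k) = ∑ k ∈ s, multiIter δ α (f k) := by
  obtain ⟨φ, hφ⟩ : ∃ φ : A →+ A, ⇑φ = multiIter δ α :=
    multiIter_induction δ (P := fun f => ∃ φ : A →+ A, ⇑φ = f) ⟨AddMonoidHom.id A, rfl⟩
      (fun _ _ ⟨φ, hφ⟩ ⟨ψ, hψ⟩ => ⟨φ.comp ψ, by rw [AddMonoidHom.coe_comp, hφ, hψ]⟩)
      (fun i => ⟨AddMonoidHom.mk' (δ i) (hadd i), rfl⟩) α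
  rw [← hφ, map_sum]

lemma multiIter_const_mul (hleib : ∀ i a b, δ i (a * b) = δ i a * b + a * δ i b) {c : A}
    (hc : ∀ i, δ i c = 0) (α : Fin n → ℕ) (a : A) :
    multiIter δ α (c * a) = c * multiIter δ α a :=
  multiIter_induction δ (P := fun f => ∀ a, f (c * a) = c * f a) (fun _ => rfl)
    (fun f g hf hg a => by rw [Function.comp_apply, hg, hf, Function.comp_apply])
    (fun i a => by rw [hleib, hc, zero_mul, zero_add]) α a

lemma map_one_eq_zero_of_leibniz (hleib : ∀ i a b, δ i (a * b) = δ i a * b + a * δ i b)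
    (i : Fin n) : δ i 1 = 0 := by
  simpa using hleib i 1 1

end Additive

section Descent

variable {A : Type*} [Ring A] {n : ℕ} {δ : Fin n → A → A} {d : Fin n → ℕ∞}
  {x y : (Fin n → ℕ) → A}

open Classical in
lemma isDescent_iff : IsDescent δ d x ↔ x 0 = 1 ∧ ∀ α, ∀ β ∈ indexBox d,
    multiIter δ α (x β) = if α ≤ β then x (β - α) else 0 := by
  refine and_congr_right fun _ => forall₃_congr fun α β _ => ?_
  by_cases h : α ≤ β <;> simp [h]

open Classical in
lemma IsDescent.multiIter_apply (hx : IsDescent δ d x) (α : Fin n → ℕ) {β : Fin n → ℕ}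
    (hβ : β ∈ indexBox d) : multiIter δ α (x β) = if α ≤ β then x (β - α) else 0 :=
  (isDescent_iff.1 hx).2 α β hβ

lemma zero_mem_indexBox : (0 : Fin n → ℕ) ∈ indexBox d := fun i => by simp

lemma IsDescent.of_eqOn (hy : IsDescent δ d y) (h : Set.EqOn x y (indexBox d)) :
    IsDescent δ d x := by
  refine isDescent_iff.2 ⟨(h zero_mem_indexBox).trans hy.1, fun α β hβ => ?_⟩
  rw [h hβ, hy.multiIter_apply α hβ]
  split_ifs
  · exact (h (mem_indexBox_of_le hβ tsub_le_self)).symm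
  · rfl

open Classical in
lemma IsDescent.sum_mul_multiIter (hx : IsDescent δ d x) (c : (Fin n → ℕ) → A) (α : Fin n → ℕ)
    {γ : Fin n → ℕ} (hγ : γ ∈ indexBox d) :
    ∑ β ∈ Icc 0 γ, c β * multiIter δ α (x (γ - β)) =
      if α ≤ γ then convolve c x (γ - α) else 0 := by
  rw [convolve, ← sum_Icc_ite_le_tsub]
  refine sum_congr rfl fun β hβ => ?_
  rw [hx.multiIter_apply α (mem_indexBox_of_le hγ tsub_le_self), mul_ite, mul_zero,
    tsub_right_comm]

lemma IsDescent.isDescent_convolve (hadd : ∀ i a b, δ i (a + b) = δ i a + δ i b)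
    (hleib : ∀ i a b, δ i (a * b) = δ i a * b + a * δ i b) (hx : IsDescent δ d x)
    {c : (Fin n → ℕ) → A} (hc : ∀ γ i, δ i (c γ) = 0) (hc0 : c 0 = 1) :
    IsDescent δ d (convolve c x) := by
  refine isDescent_iff.2 ⟨by rw [convolve_zero, hc0, hx.1, one_mul], fun α β hβ => ?_⟩
  rw [← hx.sum_mul_multiIter c α hβ, convolve, multiIter_map_sum hadd]
  exact sum_congr rfl fun γ _ => multiIter_const_mul hleib (hc γ) α _

lemma IsDescent.deriv_descentCoeff (hadd : ∀ i a b, δ i (a + b) = δ i a + δ i b)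
    (hleib : ∀ i a b, δ i (a * b) = δ i a * b + a * δ i b) (hx : IsDescent δ d x)
    (hy : IsDescent δ d y) (i : Fin n) (γ : Fin n → ℕ) : δ i (descentCoeff d x y γ) = 0 := by
  induction γ using WellFoundedLT.induction with
  | _ γ ih =>
  by_cases hγ : γ ∈ indexBox d
  swap
  · rw [descentCoeff_of_notMem hγ]
    simpa using hadd i 0 0
  set c := descentCoeff d x y
  have hδ : δ i = multiIter δ (Pi.single i 1) := by rw [multiIter_single, Function.iterate_one]
  have hconst : ∑ β ∈ Icc 0 γ, δ i (c β) * x (γ - β) = δ i (c γ) := by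
    rw [sum_eq_single_of_mem γ (right_mem_Icc.2 zero_le) fun β hβ hne => by
      rw [ih β ((mem_Icc.1 hβ).2.lt_of_ne hne), zero_mul], tsub_self, hx.1, mul_one]
  have hvar : ∑ β ∈ Icc 0 γ, c β * δ i (x (γ - β)) = δ i (y γ) := by
    rw [hδ, hx.sum_mul_multiIter c _ hγ, hy.multiIter_apply _ hγ,
      convolve_descentCoeff hx.1 (mem_indexBox_of_le hγ tsub_le_self)]
  have h : δ i (convolve c x γ) = δ i (y γ) := by rw [convolve_descentCoeff hx.1 hγ]
  rw [convolve, hδ, multiIter_map_sum hadd, ← hδ] at h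
  simp only [hleib, sum_add_distrib, hconst, hvar] at h
  exact add_eq_right.1 h

theorem IsDescent.isDescent_iff_exists_convolve (hadd : ∀ i a b, δ i (a + b) = δ i a + δ i b)
    (hleib : ∀ i a b, δ i (a * b) = δ i a * b + a * δ i b) (hx : IsDescent δ d x) :
    IsDescent δ d y ↔ ∃ c : (Fin n → ℕ) → A, c 0 = 1 ∧ (∀ γ i, δ i (c γ) = 0) ∧
      Set.EqOn y (convolve c x) (indexBox d) := by
  refine ⟨fun hy => ⟨descentCoeff d x y, ?_, fun γ i => hx.deriv_descentCoeff hadd hleib hy i γ,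
    fun γ hγ => (convolve_descentCoeff hx.1 hγ).symm⟩, fun ⟨c, hc0, hc, h⟩ =>
      (hx.isDescent_convolve hadd hleib hc hc0).of_eqOn h⟩
  simpa [convolve_zero, hx.1, hy.1] using convolve_descentCoeff (x' := y) hx.1 zero_mem_indexBox

theorem IsDescent.isDescent_iff_exists_left (hadd : ∀ i a b, δ i (a + b) = δ i a + δ i b)
    (hleib : ∀ i a b, δ i (a * b) = δ i a * b + a * δ i b) (hx : IsDescent δ d x) :
    IsDescent δ d y ↔ y 0 = 1 ∧ ∃ l : (Fin n → ℕ) → A, (∀ γ i, δ i (l γ) = 0) ∧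
      ∀ α : Fin n → ℕ, α ≠ 0 → α ∈ indexBox d →
        y α = x α + ∑ β ∈ (Icc 0 α).erase 0, l β * x (α - β) := by
  rw [hx.isDescent_iff_exists_convolve hadd hleib]
  constructor
  · rintro ⟨c, hc0, hc, h⟩
    refine ⟨by rw [h zero_mem_indexBox, convolve_zero, hc0, hx.1, one_mul], c, hc,
      fun α _ hα => by rw [h hα, convolve_eq_add_sum_erase hc0]⟩
  · rintro ⟨hy0, l, hl, h⟩
    refine ⟨Function.update l 0 1, Function.update_self .., fun γ i => ?_, fun α hα => ?_⟩
    · by_cases hγ : γ = 0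
      · rw [hγ, Function.update_self]
        exact map_one_eq_zero_of_leibniz hleib i
      · rw [Function.update_of_ne hγ]
        exact hl γ i
    · rw [convolve_eq_add_sum_erase (Function.update_self ..)]
      by_cases hα0 : α = 0
      · simp [hα0, hy0, hx.1]
      · rw [h α hα0 hα]
        exact congrArg _ <| sum_congr rfl fun β hβ => by
          rw [Function.update_of_ne (ne_of_mem_erase hβ)]

lemma isDescent_op : IsDescent (fun i a => op (δ i (unop a))) d (op ∘ x) ↔ IsDescent δ d x := by
  have hop (α : Fin n → ℕ) (a : A) :
      multiIter (fun i a => op (δ i (unop a))) α (op a) = op (multiIter δ α a) :=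
    (multiIter_semiconj δ _ (fun _ _ => rfl) α a).symm
  simp only [isDescent_iff, Function.comp_apply, hop, op_eq_one_iff]
  refine and_congr_right fun _ => forall₃_congr fun α β _ => ?_
  split_ifs <;> simp

end Descent

theorem descent_characterisation_general
    {A : Type*} [Ring A] {n : ℕ} (δ : Fin n → A → A)
    (hadd : ∀ i a b, δ i (a + b) = δ i a + δ i b)
    (hleib : ∀ i a b, δ i (a * b) = δ i a * b + a * δ i b)
    (d : Fin n → ℕ∞) (x : (Fin n → ℕ) → A) (hx : IsDescent δ d x)
    (x' : (Fin n → ℕ) → A) :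
    (IsDescent δ d x' ↔
      (x' 0 = 1 ∧ ∃ l : (Fin n → ℕ) → A, (∀ γ i, δ i (l γ) = 0) ∧
        ∀ α : Fin n → ℕ, α ≠ 0 → (∀ i, (α i : ℕ∞) ≤ d i) →
          x' α = x α + ∑ β ∈ (Finset.Icc 0 α).erase 0, l β * x (α - β))) ∧
    (IsDescent δ d x' ↔
      (x' 0 = 1 ∧ ∃ m : (Fin n → ℕ) → A, (∀ γ i, δ i (m γ) = 0) ∧
        ∀ α : Fin n → ℕ, α ≠ 0 → (∀ i, (α i : ℕ∞) ≤ d i) →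
          x' α = x α + ∑ β ∈ (Finset.Icc 0 α).erase 0, x (α - β) * m β)) := by
  refine ⟨hx.isDescent_iff_exists_left hadd hleib, ?_⟩
  have hop := (isDescent_op.2 hx).isDescent_iff_exists_left (y := op ∘ x')
    (fun i a b => by simp [hadd]) (fun i a b => by simp [hleib, add_comm])
  rw [isDescent_op, op_surjective.comp_left.exists] at hop
  rw [hop]
  simp [indexBox, ← op_mul, ← op_sum, ← op_add]

/-- **Lemma (description of all δ-descents given one of them).**
Let `{x^[α] : α ∈ I}` be a `δ`-descent.  A family `{x'^[α] : α ∈ I}` is a `δ`-descent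
iff `x'^[0] = 1` and `x'^[α] = x^[α] + Σ_{0 ≠ β ≤ α} λ_β x^[α-β]` for suitable constants
`λ_β ∈ A^δ`, iff `x'^[0] = 1` and `x'^[α] = x^[α] + Σ_{0 ≠ β ≤ α} x^[α-β] μ_β` for
suitable constants `μ_β ∈ A^δ`. -/
theorem descent_characterisation
    {A : Type*} [Ring A] {n : ℕ} (δ : Fin n → A → A)
    (hadd : ∀ i a b, δ i (a + b) = δ i a + δ i b)
    (hleib : ∀ i a b, δ i (a * b) = δ i a * b + a * δ i b)
    (hcomm : ∀ i j a, δ i (δ j a) = δ j (δ i a))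
    (d : Fin n → ℕ∞) (x : (Fin n → ℕ) → A) (hx : IsDescent δ d x)
    (x' : (Fin n → ℕ) → A) :
    (IsDescent δ d x' ↔
      (x' 0 = 1 ∧ ∃ l : (Fin n → ℕ) → A, (∀ γ i, δ i (l γ) = 0) ∧
        ∀ α : Fin n → ℕ, α ≠ 0 → (∀ i, (α i : ℕ∞) ≤ d i) →
          x' α = x α + ∑ β ∈ (Finset.Icc 0 α).erase 0, l β * x (α - β))) ∧
    (IsDescent δ d x' ↔
      (x' 0 = 1 ∧ ∃ m : (Fin n → ℕ) → A, (∀ γ i, δ i (m γ) = 0) ∧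
        ∀ α : Fin n → ℕ, α ≠ 0 → (∀ i, (α i : ℕ∞) ≤ d i) →
          x' α = x α + ∑ β ∈ (Finset.Icc 0 α).erase 0, x (α - β) * m β)) :=
  descent_characterisation_general δ hadd hleib d x hx x'
end

section
/- (Rigidity of Aut_K(D(P_n))) Let K be a field of characteristic p > 0 and let σ, τ be K-algebra automorphisms of D(P_n). Then σ = τ if and only if σ(x_1) = τ(x_1), …, σ(x_n) = τ(x_n) (where x_i denotes the multiplication operator by x_i). -/
open MvPolynomial

variable (K : Type*) [Field K] (n : ℕ)

/-- The higher (Hasse) derivative `∂^[α]` on `P_n = K[x_1,…,x_n]`: the `K`-linear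
endomorphism sending the monomial `x^β` to `(∏ i, binom(β_i, α_i)) x^{β-α}`
(which is `0` unless `β ≥ α` componentwise). -/
noncomputable def hasse (α : Fin n →₀ ℕ) : Module.End K (MvPolynomial (Fin n) K) :=
  (basisMonomials (Fin n) K).constr K fun β : Fin n →₀ ℕ =>
    (∏ i, (β i).choose (α i)) • monomial (β - α) (1 : K)

/-- The multiplication operator `g ↦ f g` on `P_n`. -/
noncomputable def mulOp (f : MvPolynomial (Fin n) K) :
    Module.End K (MvPolynomial (Fin n) K) :=
  LinearMap.mulLeft K f

/-- The ring `D(P_n)` of differential operators on `P_n`: the `K`-subalgebra of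
`End_K(P_n)` generated by the multiplication operators `x_1,…,x_n` and the higher
derivatives `∂^[α]` (each `∂^[α]` is a product of the generators `∂_i^[k]`). -/
noncomputable def DiffOps : Subalgebra K (Module.End K (MvPolynomial (Fin n) K)) :=
  Algebra.adjoin K
    (Set.range (fun i : Fin n => mulOp K n (X i)) ∪ Set.range (hasse K n))

/-- The multiplication operator by `X i`, as an element of `D(P_n)`. -/
noncomputable def xOp (i : Fin n) : DiffOps K n :=
  ⟨mulOp K n (X i), Algebra.subset_adjoin (Set.mem_union_left _ ⟨i, rfl⟩)⟩

/-- `∂^[α]`, as an element of `D(P_n)`. -/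
noncomputable def hasseOp (α : Fin n →₀ ℕ) : DiffOps K n :=
  ⟨hasse K n α, Algebra.subset_adjoin (Set.mem_union_right _ ⟨α, rfl⟩)⟩

/-- Every multiplication operator belongs to `D(P_n)`. -/
theorem mulOp_mem (f : MvPolynomial (Fin n) K) : mulOp K n f ∈ DiffOps K n := by
  have h : Algebra.adjoin K (Set.range (X : Fin n → MvPolynomial (Fin n) K)) ≤
      Subalgebra.comap (Algebra.lmul K (MvPolynomial (Fin n) K)) (DiffOps K n) := by
    rw [Algebra.adjoin_le_iff]
    rintro _ ⟨i, rfl⟩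
    show Algebra.lmul K (MvPolynomial (Fin n) K) (X i) ∈ DiffOps K n
    have : Algebra.lmul K (MvPolynomial (Fin n) K) (X i) = mulOp K n (X i) := by
      ext g
      simp [mulOp, Algebra.lmul, LinearMap.mulLeft_apply]
    rw [this]
    exact (xOp K n i).2
  have hf : f ∈ Algebra.adjoin K (Set.range (X : Fin n → MvPolynomial (Fin n) K)) := by
    rw [MvPolynomial.adjoin_range_X]; trivial
  have := h hf
  rw [Subalgebra.mem_comap] at this
  have he : Algebra.lmul K (MvPolynomial (Fin n) K) f = mulOp K n f := by
    ext g
    simp [mulOp, Algebra.lmul, LinearMap.mulLeft_apply]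
  rwa [he] at this

/-- The multiplication operator by `f`, as an element of `D(P_n)`. -/
noncomputable def mOp (f : MvPolynomial (Fin n) K) : DiffOps K n :=
  ⟨mulOp K n f, mulOp_mem K n f⟩

/-!
Let `ρ = τ⁻¹ ∘ σ`, an endomorphism fixing every `x_j`. It suffices that `ρ` fixes each
`∂_i^[k]`, since every `∂^[α]` is a product of these; induct on `k`. As
`[∂_i^[k+1], x_j] = δ_ij ∂_i^[k]`, the difference `ρ(∂_i^[k+1]) - ∂_i^[k+1]` commutes with
all `x_j`, so it is multiplication by a polynomial `g`. In characteristic `p` we have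
`(∂_i^[k+1])^p = 0` (because `p ∣ binom(p m, m)` for `m ≠ 0`), so `∂_i^[k+1] + g` is
nilpotent. But for `g ≠ 0` this operator is injective: `∂_i^[k+1]` strictly lowers the
lexicographic leading monomial, whereas multiplication by `g` does not. Hence `g = 0`.
-/

open scoped MonomialOrder

variable {K n}

@[simp]
theorem mulOp_apply (f g : MvPolynomial (Fin n) K) : mulOp K n f g = f * g := rfl

@[simp]
theorem coe_xOp (i : Fin n) :
    (xOp K n i : Module.End K (MvPolynomial (Fin n) K)) = mulOp K n (X i) :=
  rfl

@[simp]
theorem coe_hasseOp (α : Fin n →₀ ℕ) :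
    (hasseOp K n α : Module.End K (MvPolynomial (Fin n) K)) = hasse K n α :=
  rfl

theorem hasse_monomial (α β : Fin n →₀ ℕ) (c : K) :
    hasse K n α (monomial β c) = (∏ i, (β i).choose (α i)) • monomial (β - α) c := by
  have h : monomial β (1 : K) = basisMonomials (Fin n) K β := rfl
  rw [← mul_one c, ← smul_eq_mul, ← smul_monomial, map_smul, h, hasse,
    Module.Basis.constr_basis, smul_comm, smul_monomial]

theorem hasse_ext {f g : Module.End K (MvPolynomial (Fin n) K)}
    (h : ∀ β : Fin n →₀ ℕ, f (monomial β 1) = g (monomial β 1)) : f = g := by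
  ext β : 1
  exact LinearMap.ext_ring (h β)

theorem coeff_hasse (α γ : Fin n →₀ ℕ) (f : MvPolynomial (Fin n) K) :
    coeff γ (hasse K n α f) = (∏ i, (γ i + α i).choose (α i)) • coeff (γ + α) f := by
  induction f using MvPolynomial.induction_on' with
  | monomial β c =>
    rw [hasse_monomial, coeff_smul, coeff_monomial, coeff_monomial]
    by_cases hαβ : α ≤ β
    · simp_rw [tsub_eq_iff_eq_add_of_le hαβ, eq_comm (a := β)]
      split_ifs with h
      · subst h; simp
      · simp
    · obtain ⟨i, hi⟩ : ∃ i, β i < α i := by simpa [Finsupp.le_def] using hαβ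
      have hβ : γ + α ≠ β := fun h => by subst h; simp at hi
      rw [Finset.prod_eq_zero (Finset.mem_univ i) (Nat.choose_eq_zero_of_lt hi),
        if_neg (Ne.symm hβ)]
      simp
  | add f g hf hg => rw [map_add, coeff_add, hf, hg, coeff_add, smul_add]

@[simp]
theorem hasse_zero : hasse K n 0 = 1 :=
  hasse_ext fun β => by simp [hasse_monomial]

theorem prod_choose_single (β : Fin n →₀ ℕ) (i : Fin n) (k : ℕ) :
    ∏ j, (β j).choose (Finsupp.single i k j) = (β i).choose k := by
  rw [Finset.prod_eq_single i (fun j _ hj => by simp [hj.symm])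
    (fun h => absurd (Finset.mem_univ i) h), Finsupp.single_eq_same]

theorem hasse_mul (α β : Fin n →₀ ℕ) :
    hasse K n α * hasse K n β = (∏ i, ((α + β) i).choose (α i)) • hasse K n (α + β) := by
  refine hasse_ext fun γ => ?_
  rw [Module.End.mul_apply, LinearMap.smul_apply, hasse_monomial, map_nsmul, hasse_monomial,
    hasse_monomial, smul_smul, smul_smul, tsub_tsub, add_comm β, ← Finset.prod_mul_distrib,
    ← Finset.prod_mul_distrib]
  congr 2 with i
  rw [Finsupp.add_apply, Finsupp.tsub_apply, mul_comm ((α i + β i).choose _),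
    Nat.choose_symm_add, Nat.choose_mul (Nat.le_add_left _ _), Nat.add_sub_cancel, mul_comm]

theorem hasse_single_add {i : Fin n} {α : Fin n →₀ ℕ} (hi : α i = 0) (k : ℕ) :
    hasse K n (Finsupp.single i k + α) = hasse K n (Finsupp.single i k) * hasse K n α := by
  rw [hasse_mul, prod_choose_single, Finsupp.add_apply, hi, add_zero, Finsupp.single_eq_same,
    Nat.choose_self, one_smul]

theorem hasse_single_pow (i : Fin n) (k j : ℕ) :
    hasse K n (Finsupp.single i k) ^ j
      = (∏ l ∈ Finset.range j, ((l + 1) * k).choose k)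
          • hasse K n (Finsupp.single i (j * k)) := by
  induction j with
  | zero => simp
  | succ j ih =>
    rw [pow_succ', ih, mul_smul_comm, hasse_mul, ← Finsupp.single_add, prod_choose_single,
      Finsupp.single_eq_same, Finset.prod_range_succ, smul_smul, add_one_mul, add_comm k]

theorem Nat.Prime.dvd_choose_mul_self {p : ℕ} (hp : p.Prime) {k : ℕ} (hk : k ≠ 0) :
    p ∣ (p * k).choose k := by
  have := Fact.mk hp
  induction k using Nat.strong_induction_on with
  | _ k ih =>
  rw [← Nat.modEq_zero_iff_dvd]
  by_cases hpk : p ∣ k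
  · obtain ⟨l, rfl⟩ := hpk
    have hl : l ≠ 0 := by rintro rfl; simp at hk
    exact Choose.choose_mul_mul_modEq_choose_nat.trans
      (Nat.modEq_zero_iff_dvd.mpr (ih l (lt_mul_left (Nat.pos_of_ne_zero hl) hp.one_lt) hl))
  · refine Choose.choose_modEq_choose_mod_mul_choose_div_nat.trans ?_
    rw [Nat.mul_mod_right, Nat.choose_eq_zero_of_lt (Nat.pos_of_ne_zero
      (fun h => hpk (Nat.dvd_of_mod_eq_zero h))), zero_mul]

theorem hasse_single_pow_char_eq_zero (p : ℕ) [hp : Fact p.Prime] [CharP K p] (i : Fin n)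
    {k : ℕ} (hk : k ≠ 0) : hasse K n (Finsupp.single i k) ^ p = 0 := by
  have hdvd : p ∣ ∏ l ∈ Finset.range p, ((l + 1) * k).choose k := by
    have hmem : p - 1 ∈ Finset.range p := Finset.mem_range.mpr (Nat.sub_lt hp.out.pos one_pos)
    refine dvd_trans ?_ (Finset.dvd_prod_of_mem _ hmem)
    rw [Nat.sub_add_cancel hp.out.one_le]
    exact hp.out.dvd_choose_mul_self hk
  rw [hasse_single_pow, ← Nat.cast_smul_eq_nsmul K, (CharP.cast_eq_zero_iff K p _).mpr hdvd,
    zero_smul]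

theorem hasse_single_monomial (i : Fin n) (k : ℕ) (β : Fin n →₀ ℕ) (c : K) :
    hasse K n (Finsupp.single i k) (monomial β c)
      = (β i).choose k • monomial (β - Finsupp.single i k) c := by
  rw [hasse_monomial, prod_choose_single]

theorem mulOp_X_monomial (j : Fin n) (β : Fin n →₀ ℕ) (c : K) :
    mulOp K n (X j) (monomial β c) = monomial (β + Finsupp.single j 1) c := by
  rw [mulOp_apply, X, monomial_mul, one_mul, add_comm]

theorem commute_hasse_single_mulOp_X {i j : Fin n} (hij : i ≠ j) (k : ℕ) :
    Commute (hasse K n (Finsupp.single i k)) (mulOp K n (X j)) := by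
  refine hasse_ext fun β => ?_
  have hexp : β + Finsupp.single j 1 - Finsupp.single i k
      = β - Finsupp.single i k + Finsupp.single j 1 := by
    ext m
    simp only [Finsupp.tsub_apply, Finsupp.add_apply, Finsupp.single_apply]
    split_ifs <;> omega
  rw [Module.End.mul_apply, Module.End.mul_apply, mulOp_X_monomial, hasse_single_monomial,
    hasse_single_monomial, map_nsmul, mulOp_X_monomial, hexp, Finsupp.add_apply,
    Finsupp.single_eq_of_ne hij, add_zero]

theorem hasse_single_succ_mul_mulOp_X (i : Fin n) (k : ℕ) :
    hasse K n (Finsupp.single i (k + 1)) * mulOp K n (X i)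
      = mulOp K n (X i) * hasse K n (Finsupp.single i (k + 1))
        + hasse K n (Finsupp.single i k) := by
  refine hasse_ext fun β => ?_
  have hexp : β + Finsupp.single i 1 - Finsupp.single i (k + 1) = β - Finsupp.single i k := by
    ext m
    simp only [Finsupp.tsub_apply, Finsupp.add_apply, Finsupp.single_apply]
    split_ifs <;> omega
  have hterm : (β i).choose (k + 1) • monomial (β - Finsupp.single i (k + 1)
        + Finsupp.single i 1) (1 : K)
      = (β i).choose (k + 1) • monomial (β - Finsupp.single i k) 1 := by
    rcases lt_or_ge (β i) (k + 1) with hlt | hge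
    · rw [Nat.choose_eq_zero_of_lt hlt, zero_smul, zero_smul]
    · have hexp' : β - Finsupp.single i (k + 1) + Finsupp.single i 1
          = β - Finsupp.single i k := by
        ext m
        simp only [Finsupp.tsub_apply, Finsupp.add_apply, Finsupp.single_apply]
        split_ifs with h
        · subst h; omega
        · rfl
      rw [hexp']
  rw [LinearMap.add_apply, Module.End.mul_apply, Module.End.mul_apply, mulOp_X_monomial,
    hasse_single_monomial, hasse_single_monomial, hasse_single_monomial, map_nsmul,
    mulOp_X_monomial, hexp, hterm, Finsupp.add_apply, Finsupp.single_eq_same,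
    Nat.choose_succ_succ', add_smul, add_comm]

theorem eq_mulOp_of_forall_commute {v : Module.End K (MvPolynomial (Fin n) K)}
    (h : ∀ j, Commute v (mulOp K n (X j))) : v = mulOp K n (v 1) := by
  have hv : ∀ f, Commute v (mulOp K n f) := by
    have hX : Algebra.adjoin K (Set.range X) ≤
        (Subalgebra.centralizer K {v}).comap (Algebra.lmul K (MvPolynomial (Fin n) K)) :=
      Algebra.adjoin_le <| by
        rintro _ ⟨j, rfl⟩
        rw [SetLike.mem_coe, Subalgebra.mem_comap, Subalgebra.mem_centralizer_iff]
        rintro _ rfl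
        exact (h j).eq
    intro f
    have hf := hX (x := f) (adjoin_range_X (R := K) (σ := Fin n) ▸ Algebra.mem_top)
    rw [Subalgebra.mem_comap, Subalgebra.mem_centralizer_iff] at hf
    exact hf v rfl
  refine LinearMap.ext fun f => ?_
  simpa [mulOp, mul_comm] using LinearMap.congr_fun (hv f) 1

theorem MonomialOrder.degree_hasse_lt (m : MonomialOrder (Fin n)) {α : Fin n →₀ ℕ}
    (hα : α ≠ 0) {f : MvPolynomial (Fin n) K} (hf : hasse K n α f ≠ 0) :
    m.degree (hasse K n α f) ≺[m] m.degree f := by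
  set γ := m.degree (hasse K n α f)
  have hγ : coeff γ (hasse K n α f) ≠ 0 := m.coeff_degree_ne_zero_iff.mpr hf
  rw [coeff_hasse] at hγ
  have hα' : 0 < m.toSyn α := m.toSyn_lt_iff_ne_zero.mpr (by simpa using hα)
  calc m.toSyn γ < m.toSyn (γ + α) := by rw [map_add]; exact lt_add_of_pos_right _ hα'
    _ ≤ m.toSyn (m.degree f) := m.le_degree (mem_support_iff.mpr (right_ne_zero_of_smul hγ))

theorem injective_hasse_add_mulOp {α : Fin n →₀ ℕ} (hα : α ≠ 0)
    {g : MvPolynomial (Fin n) K} (hg : g ≠ 0) :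
    Function.Injective (hasse K n α + mulOp K n g) := by
  let m : MonomialOrder (Fin n) := MonomialOrder.lex
  rw [injective_iff_map_eq_zero]
  intro f hf
  by_contra hf0
  rw [LinearMap.add_apply, mulOp_apply, add_comm] at hf
  rcases eq_or_ne (hasse K n α f) 0 with h0 | h0
  · rw [h0, add_zero] at hf
    exact mul_ne_zero hg hf0 hf
  · have hlt : m.degree (hasse K n α f) ≺[m] m.degree (g * f) := by
      rw [m.degree_mul hg hf0, map_add, add_comm]
      exact (m.degree_hasse_lt hα h0).trans_le (m.le_add_right _ _)
    have hlc := m.leadingCoeff_add_of_lt hlt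
    rw [hf, m.leadingCoeff_zero, eq_comm, m.leadingCoeff_eq_zero_iff] at hlc
    exact mul_ne_zero hg hf0 hlc

theorem not_isNilpotent_hasse_add_mulOp {α : Fin n →₀ ℕ} (hα : α ≠ 0)
    {g : MvPolynomial (Fin n) K} (hg : g ≠ 0) :
    ¬ IsNilpotent (hasse K n α + mulOp K n g) := by
  rintro ⟨N, hN⟩
  have hinj := (injective_hasse_add_mulOp hα hg).iterate N
  rw [← Module.End.coe_pow, hN] at hinj
  exact one_ne_zero (hinj (a₁ := 1) (a₂ := 0) rfl)

@[simp]
theorem hasseOp_zero : hasseOp K n 0 = 1 :=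
  Subtype.ext hasse_zero

theorem hasseOp_single_add {i : Fin n} {α : Fin n →₀ ℕ} (hi : α i = 0) (k : ℕ) :
    hasseOp K n (Finsupp.single i k + α) = hasseOp K n (Finsupp.single i k) * hasseOp K n α :=
  Subtype.ext (hasse_single_add hi k)

theorem hasseOp_single_succ_mul_xOp (i j : Fin n) (k : ℕ) :
    hasseOp K n (Finsupp.single i (k + 1)) * xOp K n j
      = xOp K n j * hasseOp K n (Finsupp.single i (k + 1))
        + if j = i then hasseOp K n (Finsupp.single i k) else 0 := by
  apply Subtype.ext
  split_ifs with hji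
  · subst hji
    exact hasse_single_succ_mul_mulOp_X j k
  · rw [add_zero]
    exact (commute_hasse_single_mulOp_X (Ne.symm hji) (k + 1)).eq

theorem isNilpotent_hasseOp_single (p : ℕ) [Fact p.Prime] [CharP K p] (i : Fin n) {k : ℕ}
    (hk : k ≠ 0) : IsNilpotent (hasseOp K n (Finsupp.single i k)) :=
  ⟨p, Subtype.ext (hasse_single_pow_char_eq_zero p i hk)⟩

theorem adjoin_xOp_hasseOp :
    Algebra.adjoin K (Set.range (xOp K n) ∪ Set.range (hasseOp K n)) = ⊤ := by
  refine (congrArg (Algebra.adjoin K) ?_).trans (Algebra.adjoin_adjoin_coe_preimage (R := K)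
    (s := Set.range (fun i : Fin n => mulOp K n (X i)) ∪ Set.range (hasse K n)))
  ext D
  simp only [Set.mem_union, Set.mem_range]
  constructor
  · rintro (⟨i, rfl⟩ | ⟨α, rfl⟩)
    exacts [Or.inl ⟨i, rfl⟩, Or.inr ⟨α, rfl⟩]
  · rintro (⟨i, hi⟩ | ⟨α, hα⟩)
    exacts [Or.inl ⟨i, Subtype.ext hi⟩, Or.inr ⟨α, Subtype.ext hα⟩]

theorem map_hasseOp_single_of_map_xOp (p : ℕ) [Fact p.Prime] [CharP K p]
    {φ : DiffOps K n →ₐ[K] DiffOps K n} (hφ : ∀ i, φ (xOp K n i) = xOp K n i) (i : Fin n) :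
    ∀ k, φ (hasseOp K n (Finsupp.single i k)) = hasseOp K n (Finsupp.single i k)
  | 0 => by rw [Finsupp.single_zero, hasseOp_zero, map_one]
  | k + 1 => by
    have hcomm : ∀ j, Commute ((φ (hasseOp K n (Finsupp.single i (k + 1)))).val
        - hasse K n (Finsupp.single i (k + 1))) (mulOp K n (X j)) := fun j => by
      have hφD := congrArg φ (hasseOp_single_succ_mul_xOp i j k)
      rw [map_mul, map_add, map_mul, hφ, apply_ite φ,
        map_hasseOp_single_of_map_xOp p hφ i k, map_zero] at hφD
      have hD := hasseOp_single_succ_mul_xOp (K := K) i j k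
      apply_fun Subtype.val at hφD hD
      simp only [Subalgebra.coe_mul, Subalgebra.coe_add, coe_xOp, coe_hasseOp] at hφD hD
      rw [commute_iff_eq, sub_mul, mul_sub, hφD, hD]
      abel
    have hval := eq_mulOp_of_forall_commute hcomm
    have hnil := ((isNilpotent_hasseOp_single p i k.succ_ne_zero).map φ).map (DiffOps K n).val
    rw [Subalgebra.val_apply, ← sub_add_cancel (φ _).val (hasse K n _), hval, add_comm] at hnil
    have hg : ((φ (hasseOp K n (Finsupp.single i (k + 1)))).val
        - hasse K n (Finsupp.single i (k + 1))) 1 = 0 := by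
      by_contra hg
      exact not_isNilpotent_hasse_add_mulOp (α := Finsupp.single i (k + 1)) (by simp) hg hnil
    rw [hg] at hval
    exact Subtype.ext (sub_eq_zero.mp hval)

theorem map_hasseOp_of_map_xOp (p : ℕ) [Fact p.Prime] [CharP K p]
    {φ : DiffOps K n →ₐ[K] DiffOps K n} (hφ : ∀ i, φ (xOp K n i) = xOp K n i)
    (α : Fin n →₀ ℕ) : φ (hasseOp K n α) = hasseOp K n α := by
  induction α using Finsupp.induction with
  | zero => rw [hasseOp_zero, map_one]
  | single_add i k α hi _ ih =>
    rw [hasseOp_single_add (Finsupp.notMem_support_iff.mp hi), map_mul,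
      map_hasseOp_single_of_map_xOp p hφ, ih]

theorem eq_id_of_map_xOp (p : ℕ) [Fact p.Prime] [CharP K p]
    {φ : DiffOps K n →ₐ[K] DiffOps K n} (hφ : ∀ i, φ (xOp K n i) = xOp K n i) :
    φ = AlgHom.id K (DiffOps K n) := by
  refine AlgHom.ext_of_adjoin_eq_top adjoin_xOp_hasseOp ?_
  rintro _ (⟨i, rfl⟩ | ⟨α, rfl⟩)
  exacts [hφ i, map_hasseOp_of_map_xOp p hφ α]

/-- **Theorem (rigidity of `Aut_K(D(P_n))`).**
Let `K` be a field of characteristic `p > 0` and `σ, τ` `K`-algebra automorphisms of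
`D(P_n)`.  Then `σ = τ` iff `σ(x_i) = τ(x_i)` for `i = 1,…,n` (where `x_i` is the
multiplication operator by `x_i`). -/
theorem diffOps_aut_rigidity
    {K : Type*} [Field K] {n : ℕ} (p : ℕ) (hp : 0 < p) [CharP K p]
    (σ τ : DiffOps K n ≃ₐ[K] DiffOps K n) :
    σ = τ ↔ ∀ i : Fin n, σ (xOp K n i) = τ (xOp K n i) := by
  refine ⟨fun h i => h ▸ rfl, fun h => ?_⟩
  have : NeZero p := ⟨hp.ne'⟩
  have := CharP.char_is_prime_of_pos K p
  have hid := eq_id_of_map_xOp p (φ := (τ.symm : DiffOps K n →ₐ[K] DiffOps K n).comp σ)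
    fun i => by simp [h i]
  refine AlgEquiv.ext fun D => ?_
  simpa using congrArg τ (AlgHom.congr_fun hid D)
end
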